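/- Strict improvement, overpricing case: let (u,p) ∈ S and suppose the set Γ := { t ∈ [0,T] : p(t) > a·u(t) + α(t)/(2β(t)) and u(t) < α(t)/(2aβ(t)) } has positive Lebesgue measure. Then there exists (ũ,p̃) ∈ S whose inventory trajectory coincides with that of (u,p) on [0,T] and such that J_σ(ũ,p̃) > J_σ(u,p); in particular (u,p) is not optimal for J_σ. -/

import Mathlib

open MeasureTheory Set
open scoped NNReal

noncomputable section

def holding (Ch Cs x : ℝ) : ℝ := if x < 0 then Cs * x ^ 2 else Ch * x ^ 2

def memS (T a : ℝ) (α β : ℝ → ℝ) (u p : ℝ → ℝ) : Prop :=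
  Measurable u ∧ Measurable p ∧
  ∀ t ∈ Icc (0 : ℝ) T,
    0 ≤ u t ∧ u t ≤ α t / (2 * a * β t) ∧ 0 ≤ p t ∧ p t ≤ α t / β t

def traj (α β : ℝ → ℝ) (x₀ : ℝ) (u p : ℝ → ℝ) (t : ℝ) : ℝ :=
  x₀ + ∫ s in (0 : ℝ)..t, (u s - max (α s - β s * p s) 0)

def Jobj (T a σ Ch Cs ChT CsT : ℝ) (α β : ℝ → ℝ) (x₀ : ℝ) (u p : ℝ → ℝ) : ℝ :=
  (∫ s in (0 : ℝ)..T,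
    (p s * max (α s - β s * p s) 0 - a * u s ^ 2 - holding Ch Cs (traj α β x₀ u p s)))
  - holding ChT CsT (traj α β x₀ u p T)
  - σ * sSup (traj α β x₀ u p '' Icc 0 T)

lemma holding_continuous (Ch Cs : ℝ) : Continuous (holding Ch Cs) := by
  unfold holding
  apply Continuous.if
  · intro x hx
    have hx0 : x = 0 := by
      have := frontier_lt_subset_eq (continuous_id) (continuous_const (y := (0:ℝ))) hx
      simpa using this
    simp [hx0]
  · fun_prop
  · fun_prop

lemma integrableOn_of_bound {f : ℝ → ℝ} {s : Set ℝ} (hs : MeasurableSet s)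
    (hvol : volume s ≠ ⊤) (hf : Measurable f) {M : ℝ}
    (hM : ∀ t ∈ s, |f t| ≤ M) : IntegrableOn f s volume := by
  have hc : Integrable (fun _ : ℝ => M) (volume.restrict s) := by
    apply integrable_const_iff.2
    right
    exact isFiniteMeasure_restrict.2 hvol
  refine hc.mono' hf.aestronglyMeasurable ?_
  filter_upwards [ae_restrict_mem hs] with t ht
  simpa using hM t ht

set_option maxHeartbeats 2000000 in
/-- strict improvement, overpricing case: if the set where
`p(t) > a u(t) + α(t)/(2β(t))` and `u(t) < α(t)/(2aβ(t))` has positive measure,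
then there is a strictly better policy with the same inventory trajectory. -/
theorem strict_improvement_overpricing
    (T a σ Ch Cs ChT CsT : ℝ)
    (hT : 0 < T) (ha : 0 < a) (hσ : 0 ≤ σ)
    (hCh : 0 < Ch) (hCs : 0 < Cs) (hChT : 0 < ChT) (hCsT : 0 < CsT)
    (α β : ℝ → ℝ)
    (hαLip : ∃ K : ℝ≥0, LipschitzOnWith K α (Icc 0 T))
    (hβLip : ∃ K : ℝ≥0, LipschitzOnWith K β (Icc 0 T))
    (hα : ∀ t ∈ Icc (0 : ℝ) T, 0 < α t) (hβ : ∀ t ∈ Icc (0 : ℝ) T, 0 < β t)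
    (x₀ : ℝ) (u p : ℝ → ℝ) (hmem : memS T a α β u p)
    (hΓ : 0 < volume {t | t ∈ Icc (0 : ℝ) T ∧
      a * u t + α t / (2 * β t) < p t ∧ u t < α t / (2 * a * β t)}) :
    ∃ utld ptld : ℝ → ℝ, memS T a α β utld ptld ∧
      (∀ t ∈ Icc (0 : ℝ) T, traj α β x₀ utld ptld t = traj α β x₀ u p t) ∧
      Jobj T a σ Ch Cs ChT CsT α β x₀ u p < Jobj T a σ Ch Cs ChT CsT α β x₀ utld ptld := by
  classical
  obtain ⟨hu_meas, hp_meas, hbounds⟩ := hmem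
  obtain ⟨Kα, hKα⟩ := hαLip
  obtain ⟨A, hALip, hAeq⟩ := hKα.extend_real
  obtain ⟨Kβ, hKβ⟩ := hβLip
  obtain ⟨B, hBLip, hBeq⟩ := hKβ.extend_real
  have hAcont : Continuous A := hALip.continuous
  have hBcont : Continuous B := hBLip.continuous
  have hAm : Measurable A := hAcont.measurable
  have hBm : Measurable B := hBcont.measurable
  have hAe : ∀ t ∈ Icc (0:ℝ) T, α t = A t := fun t ht => hAeq ht
  have hBe : ∀ t ∈ Icc (0:ℝ) T, β t = B t := fun t ht => hBeq ht
  set Γ : Set ℝ := {t | t ∈ Icc (0:ℝ) T ∧ a * u t + A t / (2 * B t) < p t ∧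
      u t < A t / (2 * a * B t)} with hΓdef
  have hΓsub : Γ ⊆ Icc (0:ℝ) T := fun t ht => ht.1
  have hΓset : {t | t ∈ Icc (0:ℝ) T ∧ a * u t + α t / (2 * β t) < p t ∧
      u t < α t / (2 * a * β t)} = Γ := by
    ext t
    by_cases ht : t ∈ Icc (0:ℝ) T
    · simp only [hΓdef, mem_setOf_eq, ht, true_and, hAe t ht, hBe t ht]
    · constructor
      · rintro ⟨h, -⟩; exact absurd h ht
      · rintro ⟨h, -⟩; exact absurd h ht
  have hΓpos : 0 < volume Γ := by rw [← hΓset]; exact hΓ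
  have hΓmeas : MeasurableSet Γ := by
    have h1 : MeasurableSet {t : ℝ | a * u t + A t / (2 * B t) < p t} :=
      measurableSet_lt ((measurable_const.mul hu_meas).add
        (hAm.div (measurable_const.mul hBm))) hp_meas
    have h2 : MeasurableSet {t : ℝ | u t < A t / (2 * a * B t)} :=
      measurableSet_lt hu_meas (hAm.div (measurable_const.mul hBm))
    have : Γ = Icc (0:ℝ) T ∩ ({t : ℝ | a * u t + A t / (2 * B t) < p t} ∩
        {t : ℝ | u t < A t / (2 * a * B t)}) := by
      ext t; simp [hΓdef, and_assoc]
    rw [this]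
    exact measurableSet_Icc.inter (h1.inter h2)
  set δ : ℝ → ℝ := Γ.indicator (fun t => min (A t / (2 * a * B t) - u t)
      ((p t - a * u t - A t / (2 * B t)) * B t / (1 + a * B t))) with hδdef
  have hδ_meas : Measurable δ := by
    apply Measurable.indicator _ hΓmeas
    apply Measurable.min
    · exact (hAm.div (measurable_const.mul hBm)).sub hu_meas
    · exact (((hp_meas.sub (measurable_const.mul hu_meas)).sub
        (hAm.div (measurable_const.mul hBm))).mul hBm).div
        (measurable_const.add (measurable_const.mul hBm))
  set uu : ℝ → ℝ := fun t => u t + δ t with huu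
  set pp : ℝ → ℝ := fun t => p t - δ t / B t with hpp
  have huu_meas : Measurable uu := hu_meas.add hδ_meas
  have hpp_meas : Measurable pp := hp_meas.sub (hδ_meas.div hBm)
  -- facts off Γ
  have hoff : ∀ t, t ∉ Γ → uu t = u t ∧ pp t = p t := by
    intro t ht
    have h0 : δ t = 0 := indicator_of_notMem ht _
    constructor
    · simp [huu, h0]
    · simp [hpp, h0]
  -- facts on Γ
  have hon : ∀ t ∈ Γ, 0 < B t ∧ 0 < A t ∧ 0 < δ t ∧
      uu t ≤ A t / (2 * a * B t) ∧
      δ t * (1 + a * B t) ≤ (p t - a * u t - A t / (2 * B t)) * B t ∧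
      δ t / B t ≤ p t - a * u t - A t / (2 * B t) ∧
      0 ≤ pp t ∧ pp t ≤ p t := by
    intro t ht
    obtain ⟨htI, h1, h2⟩ := id ht
    have hBpos : 0 < B t := (hBe t htI) ▸ hβ t htI
    have hApos : 0 < A t := (hAe t htI) ▸ hα t htI
    have hu0 : 0 ≤ u t := (hbounds t htI).1
    have he : 0 < p t - a * u t - A t / (2 * B t) := by linarith
    have hg : 0 < A t / (2 * a * B t) - u t := by linarith
    have h1aB : 0 < 1 + a * B t := by positivity
    have hm2 : 0 < (p t - a * u t - A t / (2 * B t)) * B t / (1 + a * B t) := by positivity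
    have hδval : δ t = min (A t / (2 * a * B t) - u t)
        ((p t - a * u t - A t / (2 * B t)) * B t / (1 + a * B t)) :=
      indicator_of_mem ht _
    have hδpos : 0 < δ t := by rw [hδval]; exact lt_min hg hm2
    have hδg : δ t ≤ A t / (2 * a * B t) - u t := by
      rw [hδval]; exact min_le_left _ _
    have hδe : δ t * (1 + a * B t) ≤ (p t - a * u t - A t / (2 * B t)) * B t := by
      rw [hδval]
      refine (le_div_iff₀ h1aB).1 (min_le_right _ _)
    have hq : δ t / B t ≤ p t - a * u t - A t / (2 * B t) := by
      rw [div_le_iff₀ hBpos]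
      nlinarith [mul_pos hδpos (mul_pos ha hBpos)]
    refine ⟨hBpos, hApos, hδpos, by simp only [huu]; linarith, hδe, hq, ?_, ?_⟩
    · have : 0 ≤ a * u t + A t / (2 * B t) := by positivity
      simp only [hpp]; linarith
    · simp only [hpp]
      have : 0 ≤ δ t / B t := by positivity
      linarith
  -- membership of new policy
  have hmem' : memS T a α β uu pp := by
    refine ⟨huu_meas, hpp_meas, ?_⟩
    intro t htI
    by_cases ht : t ∈ Γ
    · obtain ⟨hBpos, hApos, hδpos, huub, _, _, hpp0, hppb⟩ := hon t ht
      obtain ⟨hu0, hub, hp0, hpb⟩ := hbounds t htI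
      refine ⟨by simp only [huu]; linarith, ?_, hpp0, le_trans hppb hpb⟩
      rw [hAe t htI, hBe t htI]; exact huub
    · obtain ⟨h1, h2⟩ := hoff t ht
      rw [h1, h2]; exact hbounds t htI
  -- trajectory integrand equality on Icc
  have hinteq : ∀ s ∈ Icc (0:ℝ) T,
      uu s - max (α s - β s * pp s) 0 = u s - max (α s - β s * p s) 0 := by
    intro s hsI
    by_cases hs : s ∈ Γ
    · obtain ⟨hBpos, hApos, hδpos, _, _, _, _, _⟩ := hon s hs
      have hβB : β s = B s := hBe s hsI
      obtain ⟨hu0, hub, hp0, hpb⟩ := hbounds s hsI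
      have hD : 0 ≤ α s - β s * p s := by
        have hβpos : 0 < β s := hβ s hsI
        rw [sub_nonneg, ← le_div_iff₀' hβpos]
        exact hpb
      have hDE : α s - β s * pp s = (α s - β s * p s) + δ s := by
        simp only [hpp, hβB]
        have hcan : B s * (δ s / B s) = δ s := mul_div_cancel₀ _ hBpos.ne'
        ring_nf
        ring_nf at hcan
        linarith
      rw [hDE, max_eq_left (by linarith), max_eq_left hD]
      simp only [huu]; ring
    · obtain ⟨h1, h2⟩ := hoff s hs
      rw [h1, h2]
  -- trajectory equality
  have htraj : ∀ t ∈ Icc (0:ℝ) T, traj α β x₀ uu pp t = traj α β x₀ u p t := by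
    intro t htI
    unfold traj
    congr 1
    apply intervalIntegral.integral_congr
    intro s hs
    rw [uIcc_of_le htI.1] at hs
    exact hinteq s ⟨hs.1, le_trans hs.2 htI.2⟩
  -- uniform bounds
  obtain ⟨MA, hMA⟩ := isCompact_Icc.exists_bound_of_continuousOn hAcont.continuousOn
  have h0I : (0:ℝ) ∈ Icc (0:ℝ) T := ⟨le_refl 0, hT.le⟩
  have hMApos : 0 < MA :=
    lt_of_lt_of_le ((hAe 0 h0I) ▸ hα 0 h0I) (le_trans (le_abs_self _) (hMA 0 h0I))
  obtain ⟨t₀, ht₀I, ht₀min⟩ := isCompact_Icc.exists_isMinOn (nonempty_Icc.2 hT.le)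
    hBcont.continuousOn
  set mβ := B t₀ with hmβ
  have hmβpos : 0 < mβ := by rw [hmβ, ← hBe t₀ ht₀I]; exact hβ t₀ ht₀I
  have hBlb : ∀ t ∈ Icc (0:ℝ) T, mβ ≤ B t := fun t ht => ht₀min ht
  have hAub : ∀ t ∈ Icc (0:ℝ) T, A t ≤ MA := fun t ht => le_trans (le_abs_self _) (hMA t ht)
  have hgb : ∀ v q : ℝ → ℝ, memS T a α β v q → ∀ t ∈ Icc (0:ℝ) T,
      0 ≤ v t ∧ v t ≤ MA / (2*a*mβ) ∧ 0 ≤ q t ∧ q t ≤ MA / mβ ∧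
      0 ≤ max (A t - B t * q t) 0 ∧ max (A t - B t * q t) 0 ≤ MA := by
    intro v q hvq t ht
    obtain ⟨-, -, hb⟩ := hvq
    obtain ⟨h1, h2, h3, h4⟩ := hb t ht
    rw [hAe t ht, hBe t ht] at h2 h4
    have hBpos : 0 < B t := lt_of_lt_of_le hmβpos (hBlb t ht)
    have hAub' := hAub t ht
    have hBlb' := hBlb t ht
    refine ⟨h1, le_trans h2 ?_, h3, le_trans h4 ?_, le_max_right _ _, ?_⟩
    · exact div_le_div₀ hMApos.le hAub' (by positivity) (by nlinarith)
    · exact div_le_div₀ hMApos.le hAub' hmβpos hBlb'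
    · have hq0 : 0 ≤ B t * q t := mul_nonneg hBpos.le h3
      exact max_le (by linarith) hMApos.le
  have habs : ∀ v q : ℝ → ℝ, memS T a α β v q → ∀ t ∈ Icc (0:ℝ) T,
      |q t * max (A t - B t * q t) 0 - a * v t ^ 2| ≤ (MA/mβ)*MA + a*(MA/(2*a*mβ))^2 := by
    intro v q hm t ht
    obtain ⟨hb1, hb2, hb3, hb4, hb5, hb6⟩ := hgb v q hm t ht
    have hMu0 : (0:ℝ) ≤ MA/(2*a*mβ) := by positivity
    have hMp0 : (0:ℝ) ≤ MA/mβ := by positivity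
    rw [abs_le]
    constructor <;>
      nlinarith [mul_nonneg hb3 hb5, mul_le_mul hb4 hb6 hb5 hMp0,
        mul_nonneg (sub_nonneg.2 hb2) (add_nonneg hMu0 hb1), sq_nonneg (v t)]
  -- integrability of the trajectory integrand
  have hibase : ∀ v q : ℝ → ℝ, Measurable v → Measurable q → memS T a α β v q →
      IntegrableOn (fun s => v s - max (α s - β s * q s) 0) (Icc (0:ℝ) T) := by
    intro v q hv hq hm
    have h1 : IntegrableOn (fun s => v s - max (A s - B s * q s) 0) (Icc (0:ℝ) T) := by
      refine integrableOn_of_bound (M := MA/(2*a*mβ) + MA) measurableSet_Icc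
        (by rw [Real.volume_Icc]; exact ENNReal.ofReal_ne_top)
        (hv.sub ((hAm.sub (hBm.mul hq)).max measurable_const)) ?_
      intro t ht
      obtain ⟨hb1, hb2, hb3, hb4, hb5, hb6⟩ := hgb v q hm t ht
      rw [abs_le]
      have hMu0 : (0:ℝ) ≤ MA/(2*a*mβ) := by positivity
      constructor <;> nlinarith
    exact h1.congr_fun (fun t ht => by simp only [hAe t ht, hBe t ht]) measurableSet_Icc
  -- continuity of trajectories on [0,T]
  have htrajcont : ∀ v q : ℝ → ℝ, Measurable v → Measurable q → memS T a α β v q →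
      ContinuousOn (traj α β x₀ v q) (Icc (0:ℝ) T) := by
    intro v q hv hq hm
    have h := intervalIntegral.continuousOn_primitive_interval (a := 0) (b := T)
      (f := fun s => v s - max (α s - β s * q s) 0) (μ := volume)
      (by rw [uIcc_of_le hT.le]; exact hibase v q hv hq hm)
    rw [uIcc_of_le hT.le] at h
    unfold traj
    exact continuousOn_const.add h
  -- interval integrability of objective integrands
  have hII : ∀ v q : ℝ → ℝ, Measurable v → Measurable q → memS T a α β v q →
      IntervalIntegrable (fun s => q s * max (α s - β s * q s) 0 - a * v s ^ 2 -
        holding Ch Cs (traj α β x₀ v q s)) volume 0 T := by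
    intro v q hv hq hm
    have hpart1 : IntervalIntegrable
        (fun s => q s * max (α s - β s * q s) 0 - a * v s ^ 2) volume 0 T := by
      rw [intervalIntegrable_iff_integrableOn_Icc_of_le hT.le]
      have h1 : IntegrableOn (fun s => q s * max (A s - B s * q s) 0 - a * v s ^ 2)
          (Icc (0:ℝ) T) := by
        refine integrableOn_of_bound (M := (MA/mβ)*MA + a*(MA/(2*a*mβ))^2) measurableSet_Icc
          (by rw [Real.volume_Icc]; exact ENNReal.ofReal_ne_top)
          ((hq.mul ((hAm.sub (hBm.mul hq)).max measurable_const)).sub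
            (measurable_const.mul (hv.pow measurable_const))) ?_
        intro t ht
        exact habs v q hm t ht
      exact h1.congr_fun (fun t ht => by simp only [hAe t ht, hBe t ht]) measurableSet_Icc
    have hpart2 : IntervalIntegrable
        (fun s => holding Ch Cs (traj α β x₀ v q s)) volume 0 T := by
      apply ContinuousOn.intervalIntegrable
      rw [uIcc_of_le hT.le]
      exact (holding_continuous Ch Cs).comp_continuousOn (htrajcont v q hv hq hm)
    exact hpart1.sub hpart2
  -- the gain function
  set fhat : ℝ → ℝ := fun s => (pp s * max (A s - B s * pp s) 0 - a * uu s ^ 2) -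
      (p s * max (A s - B s * p s) 0 - a * u s ^ 2) with hfhat
  have hfhat_meas : Measurable fhat := by
    refine Measurable.sub (Measurable.sub ?_ ?_) (Measurable.sub ?_ ?_)
    · exact hpp_meas.mul ((hAm.sub (hBm.mul hpp_meas)).max measurable_const)
    · exact measurable_const.mul (huu_meas.pow measurable_const)
    · exact hp_meas.mul ((hAm.sub (hBm.mul hp_meas)).max measurable_const)
    · exact measurable_const.mul (hu_meas.pow measurable_const)
  have hfhat_off : ∀ s, s ∉ Γ → fhat s = 0 := by
    intro s hs
    obtain ⟨h1, h2⟩ := hoff s hs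
    simp only [hfhat, h1, h2, sub_self]
  have hfhat_on : ∀ s ∈ Γ, 0 < fhat s := by
    intro s hs
    obtain ⟨hBpos, hApos, hδpos, -, hδe, -, -, -⟩ := hon s hs
    obtain ⟨hsI, hlt1, hlt2⟩ := id hs
    obtain ⟨hu0, hub, hp0, hpb⟩ := hbounds s hsI
    rw [hAe s hsI, hBe s hsI] at hpb
    have hpB : p s * B s ≤ A s := (le_div_iff₀ hBpos).1 hpb
    have hD : 0 ≤ A s - B s * p s := by linarith
    have hcan : B s * (δ s / B s) = δ s := mul_div_cancel₀ _ hBpos.ne'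
    have hDE : A s - B s * pp s = (A s - B s * p s) + δ s := by
      simp only [hpp]
      ring_nf
      ring_nf at hcan
      linarith
    simp only [hfhat]
    rw [hDE, max_eq_left (by linarith), max_eq_left hD]
    have he : 0 < p s - a * u s - A s / (2 * B s) := by linarith
    have heB : (p s - a * u s - A s / (2 * B s)) * B s
        = p s * B s - a * u s * B s - A s / 2 := by
      field_simp
    rw [heB] at hδe
    have heBpos : 0 < p s * B s - a * u s * B s - A s / 2 := by
      have := mul_pos he hBpos
      rw [heB] at this
      exact this
    have hqpos : 0 < δ s / B s := by positivity
    have hint1 := mul_le_mul_of_nonneg_left hδe hqpos.le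
    have hint2 := mul_pos hqpos heBpos
    simp only [hpp]
    nlinarith [hcan, hδpos]
  have hfhat_nonneg : ∀ s ∈ Icc (0:ℝ) T, 0 ≤ fhat s := by
    intro s hsI
    by_cases h : s ∈ Γ
    · exact (hfhat_on s h).le
    · rw [hfhat_off s h]
  -- integrability of the gain
  have hfhat_int : IntegrableOn fhat (Ioc (0:ℝ) T) := by
    have h : IntegrableOn fhat (Icc (0:ℝ) T) := by
      refine integrableOn_of_bound (M := 2*((MA/mβ)*MA + a*(MA/(2*a*mβ))^2)) measurableSet_Icc
        (by rw [Real.volume_Icc]; exact ENNReal.ofReal_ne_top) hfhat_meas ?_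
      intro t ht
      have hb1 := habs u p ⟨hu_meas, hp_meas, hbounds⟩ t ht
      have hb2 := habs uu pp hmem' t ht
      simp only [hfhat]
      calc |(pp t * max (A t - B t * pp t) 0 - a * uu t ^ 2) -
            (p t * max (A t - B t * p t) 0 - a * u t ^ 2)|
          ≤ |pp t * max (A t - B t * pp t) 0 - a * uu t ^ 2| +
            |p t * max (A t - B t * p t) 0 - a * u t ^ 2| := abs_sub _ _
        _ ≤ 2*((MA/mβ)*MA + a*(MA/(2*a*mβ))^2) := by rw [two_mul]; exact add_le_add hb2 hb1
    exact h.mono_set Ioc_subset_Icc_self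
  -- strict positivity of the gain integral
  have hpos : 0 < ∫ s in Ioc (0:ℝ) T, fhat s := by
    have hae : 0 ≤ᶠ[ae (volume.restrict (Ioc (0:ℝ) T))] fhat := by
      filter_upwards [ae_restrict_mem measurableSet_Ioc] with t ht
      exact hfhat_nonneg t ⟨ht.1.le, ht.2⟩
    rw [setIntegral_pos_iff_support_of_nonneg_ae hae hfhat_int]
    calc (0:ENNReal) < volume (Γ \ {0}) := by
            rwa [measure_diff_null (measure_singleton 0)]
        _ ≤ volume (Function.support fhat ∩ Ioc 0 T) := by
            apply measure_mono
            rintro t ⟨htΓ, ht0⟩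
            refine ⟨(hfhat_on t htΓ).ne', ?_, (hΓsub htΓ).2⟩
            have := (hΓsub htΓ).1
            rcases lt_or_eq_of_le this with h | h
            · exact h
            · exact absurd h.symm (by simpa using ht0)
  -- interval integrability of the two objective integrands
  have hIold := hII u p hu_meas hp_meas ⟨hu_meas, hp_meas, hbounds⟩
  have hInew := hII uu pp huu_meas hpp_meas hmem'
  have hsub := intervalIntegral.integral_sub hInew hIold
  have hco : (∫ s in (0:ℝ)..T,
      ((pp s * max (α s - β s * pp s) 0 - a * uu s ^ 2 -
          holding Ch Cs (traj α β x₀ uu pp s)) -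
        (p s * max (α s - β s * p s) 0 - a * u s ^ 2 -
          holding Ch Cs (traj α β x₀ u p s))))
      = ∫ s in (0:ℝ)..T, fhat s := by
    apply intervalIntegral.integral_congr
    intro s hs
    rw [uIcc_of_le hT.le] at hs
    simp only [hfhat]
    rw [htraj s hs, hAe s hs, hBe s hs]
    ring
  rw [hco, intervalIntegral.integral_of_le hT.le] at hsub
  refine ⟨uu, pp, hmem', htraj, ?_⟩
  unfold Jobj
  rw [htraj T ⟨hT.le, le_refl T⟩, image_congr htraj]
  linarith
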